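/- arXiv:2505.18327 — 5 statements merged into one kernel-verified Lean document; each statement's English description precedes it below -/
import Mathlib

section
/- Let $K$ be a symmetric invertible matrix, $g$ a vector, and $z^* = -K^{-1} g$ the exact solution of $Kz = -g$. Let $S$ be a matrix of compatible dimensions. Then the minimizer $z'$ of $\|z - z_0\|^2$ over all $z$ satisfying $S^\top K z = -S^\top g$ is given by the closed form $z' = z_0 - K S (S^\top K^2 S)^{\dagger} S^\top (K z_0 + g)$, and it satisfies $z' - z^* = (I - KS(S^\top K^2 S)^{\dagger} S^\top K)(z_0 - z^*)$. -/
/-!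
With `A = Sᵀ K` we have `Aᵀ = K S` and `Sᵀ K² S = A Aᵀ`. The first Penrose condition for
`(A Aᵀ)†` already gives `A Aᵀ (A Aᵀ)† A = A`, so `P = Aᵀ (A Aᵀ)† A` fixes the rows of `A`.
Hence `z' = z₀ - P (z₀ - z⋆)` satisfies `A z' = A z⋆ = -Sᵀ g`, and `z' - z₀` lies in the row
space of `A`, which is orthogonal to `z - z' ∈ ker A` for every solution `z`; Pythagoras gives
minimality.
-/

open Matrix
open scoped Matrix.Norms.L2Operator

/-- `B` is the Moore–Penrose pseudoinverse of `A` (the four Penrose conditions). -/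
def IsMoorePenrose {m n : Type*} [Fintype m] [Fintype n]
    (A : Matrix m n ℝ) (B : Matrix n m ℝ) : Prop :=
  A * B * A = A ∧ B * A * B = B ∧ (A * B)ᵀ = A * B ∧ (B * A)ᵀ = B * A

namespace Matrix

variable {m n : Type*} [Fintype m] [Fintype n]

theorem mul_conjTranspose_mul_mul_eq_self [DecidableEq m] {R : Type*} [Ring R] [PartialOrder R]
    [StarRing R] [StarOrderedRing R] [NoZeroDivisors R] (A : Matrix m n R) {B : Matrix m m R}
    (hB : A * Aᴴ * B * (A * Aᴴ) = A * Aᴴ) : A * Aᴴ * B * A = A := by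
  have h := (mul_self_mul_conjTranspose_eq_zero A (A * Aᴴ * B - 1)).mp
    (by rw [Matrix.sub_mul, hB, Matrix.one_mul, sub_self])
  rwa [Matrix.sub_mul, Matrix.one_mul, sub_eq_zero] at h

section Real

variable (A : Matrix m n ℝ)

theorem mulVec_sub_transpose_mul_mulVec_eq {B : Matrix m m ℝ}
    (hB : A * Aᵀ * B * (A * Aᵀ) = A * Aᵀ) (z₀ w : n → ℝ) :
    A *ᵥ (z₀ - (Aᵀ * B * A) *ᵥ (z₀ - w)) = A *ᵥ w := by
  classical
  have hrows : A * (Aᵀ * B * A) = A := by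
    have hB' : A * Aᴴ * B * (A * Aᴴ) = A * Aᴴ := by
      simpa only [conjTranspose_eq_transpose_of_trivial] using hB
    simpa only [conjTranspose_eq_transpose_of_trivial, Matrix.mul_assoc]
      using mul_conjTranspose_mul_mul_eq_self A hB'
  rw [mulVec_sub, mulVec_mulVec, hrows, mulVec_sub, sub_sub_cancel]

theorem dotProduct_self_transpose_mulVec_le {u : n → ℝ} {v : m → ℝ}
    (h : A *ᵥ u = A *ᵥ (Aᵀ *ᵥ v)) :
    (Aᵀ *ᵥ v) ⬝ᵥ (Aᵀ *ᵥ v) ≤ u ⬝ᵥ u := by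
  set p := Aᵀ *ᵥ v with hp
  have horth : (u - p) ⬝ᵥ p = 0 := by
    rw [hp, dotProduct_mulVec, vecMul_transpose, mulVec_sub, h, sub_self,
      zero_dotProduct]
  have hpyth : u ⬝ᵥ u = (u - p) ⬝ᵥ (u - p) + p ⬝ᵥ p := by
    simp only [sub_dotProduct, dotProduct_sub, dotProduct_comm p u] at horth ⊢
    linarith
  have hnonneg : 0 ≤ (u - p) ⬝ᵥ (u - p) := by
    simpa only [star_trivial] using dotProduct_self_star_nonneg (u - p)
  linarith

end Real

end Matrix

/-- The closed-form solution of the sketched projection step: `z'` solves the sketched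
system `Sᵀ K z = -Sᵀ g`, minimizes `‖z - z₀‖²` among all solutions, and satisfies
`z' - z⋆ = (I - K S (Sᵀ K² S)† Sᵀ K)(z₀ - z⋆)` where `z⋆ = -K⁻¹ g`. -/
theorem sketched_projection_step {n q : ℕ}
    (K : Matrix (Fin n) (Fin n) ℝ) (hKsym : K.IsSymm) (hKinv : IsUnit K)
    (g z₀ : Fin n → ℝ) (S : Matrix (Fin n) (Fin q) ℝ)
    (B : Matrix (Fin q) (Fin q) ℝ) (hB : IsMoorePenrose (Sᵀ * K ^ 2 * S) B)
    (zstar : Fin n → ℝ) (hzstar : zstar = -(K⁻¹ *ᵥ g))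
    (z' : Fin n → ℝ)
    (hz' : z' = z₀ - (K * S * B * Sᵀ) *ᵥ (K *ᵥ z₀ + g)) :
    Sᵀ *ᵥ (K *ᵥ z') = -(Sᵀ *ᵥ g) ∧
    (∀ z : Fin n → ℝ, Sᵀ *ᵥ (K *ᵥ z) = -(Sᵀ *ᵥ g) →
      ∑ i, (z' i - z₀ i) ^ 2 ≤ ∑ i, (z i - z₀ i) ^ 2) ∧
    z' - zstar = ((1 : Matrix (Fin n) (Fin n) ℝ) - K * S * B * Sᵀ * K) *ᵥ (z₀ - zstar) := by
  set A := Sᵀ * K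
  have hAt : Aᵀ = K * S := by rw [transpose_mul, hKsym.eq, transpose_transpose]
  have hAAt : A * Aᵀ = Sᵀ * K ^ 2 * S := by simp only [hAt, A, sq, Matrix.mul_assoc]
  have hKzstar : K *ᵥ zstar = -g := by
    rw [hzstar, mulVec_neg, mulVec_mulVec,
      mul_nonsing_inv K ((isUnit_iff_isUnit_det K).mp hKinv), one_mulVec]
  have hz'proj : z' = z₀ - (Aᵀ * B * A) *ᵥ (z₀ - zstar) := by
    have hresidual : K *ᵥ z₀ + g = K *ᵥ (z₀ - zstar) := by
      rw [mulVec_sub, hKzstar, sub_neg_eq_add]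
    rw [hz', hresidual, hAt, mulVec_mulVec]
    simp only [A, Matrix.mul_assoc]
  have hsolves : A *ᵥ z' = A *ᵥ zstar := by
    rw [hz'proj]
    exact mulVec_sub_transpose_mul_mulVec_eq A (hAAt ▸ hB.1) z₀ zstar
  have hb : A *ᵥ zstar = -(Sᵀ *ᵥ g) := by rw [← mulVec_mulVec, hKzstar, mulVec_neg]
  refine ⟨by rw [mulVec_mulVec, hsolves, hb], fun z hz => ?_, ?_⟩
  · have hstep : z' - z₀ = Aᵀ *ᵥ -((B * A) *ᵥ (z₀ - zstar)) := by
      rw [hz'proj, mulVec_neg, mulVec_mulVec, sub_sub_cancel_left, Matrix.mul_assoc]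
    have hz_solves : A *ᵥ (z - z₀) = A *ᵥ (z' - z₀) := by
      rw [mulVec_sub, mulVec_sub, hsolves, hb, ← hz, mulVec_mulVec]
    rw [hstep] at hz_solves
    simpa only [dotProduct, Pi.sub_apply, sq, ← hstep]
      using dotProduct_self_transpose_mulVec_le A hz_solves
  · rw [hz'proj, sub_mulVec, one_mulVec, hAt, sub_right_comm]
    simp only [A, Matrix.mul_assoc]
end

section
/- Let $C^\star$ and $\widetilde{C}^\star$ be as follows: $\widetilde{C}^\star$ is a random matrix with $\mathbb{E}[\widetilde{C}^\star] = C^\star$, $\|C^\star\| \leq \rho^\tau < 1$ for some $\rho \in [0,1)$ and integer $\tau \geq 1$, and $\|\mathbb{E}[\widetilde{C}^\star \Xi^\star (\widetilde{C}^\star)^\top]\| \leq \rho^\tau \|\Xi^\star\|$ for a positive semidefinite matrix $\Xi^\star$. Define $\bar{\Xi}^\star = (I - C^\star)^{-1} \mathbb{E}[(I - \widetilde{C}^\star) \Xi^\star (I - \widetilde{C}^\star)^\top] (I - C^\star)^{-1}$. Then $\bar{\Xi}^\star \succeq \Xi^\star$ and $\|\bar{\Xi}^\star - \Xi^\star\|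 \leq \frac{(1 + \rho^\tau)\rho^\tau}{(1 - \rho^\tau)^2} \|\Xi^\star\|$. -/
/-! The bound is the bias–variance identity
`𝔼[(A - C̃) Ξ (A - C̃)ᵀ] = (A - C) Ξ (A - C)ᵀ + (𝔼[C̃ Ξ C̃ᵀ] - C Ξ Cᵀ)` applied with `A = 1` and
`A = C`, where `C = 𝔼[C̃]`. With `D = 1 - C`, which is symmetric, it gives
`Ξ̄ - Ξ = D⁻¹ M D⁻¹` for `M = 𝔼[C̃ Ξ C̃ᵀ] - C Ξ C = 𝔼[(C - C̃) Ξ (C - C̃)ᵀ] ⪰ 0`. The norm bound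
follows from `‖M‖ ≤ ‖𝔼[C̃ Ξ C̃ᵀ]‖ + ‖C‖² ‖Ξ‖` and the Neumann series bound
`‖D⁻¹‖ ≤ (1 - ‖C‖)⁻¹`. -/

open Matrix MeasureTheory
open scoped Matrix.Norms.L2Operator

instance matrixMeasurableSpace {m n : Type*} : MeasurableSpace (Matrix m n ℝ) :=
  inferInstanceAs (MeasurableSpace (m → n → ℝ))

/-- The (entrywise) expectation of a random matrix. -/
noncomputable def matExp {Ω : Type*} [MeasurableSpace Ω] (μ : Measure Ω)
    {m n : Type*} (f : Ω → Matrix m n ℝ) : Matrix m n ℝ :=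
  Matrix.of fun i j => ∫ ω, f ω i j ∂μ

theorem norm_ringInverse_one_sub_le {R : Type*} [NormedRing R] [HasSummableGeomSeries R]
    (h1 : ‖(1 : R)‖ ≤ 1) {x : R} (hx : ‖x‖ < 1) :
    ‖Ring.inverse (1 - x)‖ ≤ (1 - ‖x‖)⁻¹ := by
  rw [← geom_series_eq_inverse x hx]
  linarith [tsum_geometric_le_of_norm_lt_one x hx]

theorem Matrix.l2_opNorm_one_le {n 𝕜 : Type*} [Fintype n] [DecidableEq n] [RCLike 𝕜] :
    ‖(1 : Matrix n n 𝕜)‖ ≤ 1 := by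
  rw [cstar_norm_def, map_one]
  exact ContinuousLinearMap.norm_id_le

theorem Matrix.l2_opNorm_inv_one_sub_le {n 𝕜 : Type*} [Fintype n] [DecidableEq n] [RCLike 𝕜]
    {C : Matrix n n 𝕜} {r : ℝ} (hC : ‖C‖ ≤ r) (hr : r < 1) : ‖(1 - C)⁻¹‖ ≤ (1 - r)⁻¹ := by
  rw [nonsing_inv_eq_ringInverse]
  refine (norm_ringInverse_one_sub_le l2_opNorm_one_le (hC.trans_lt hr)).trans ?_
  gcongr

section Expectation

variable {Ω : Type*} [MeasurableSpace Ω] {μ : Measure Ω} {l m n : Type*}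

def EntrywiseIntegrable (μ : Measure Ω) (f : Ω → Matrix m n ℝ) : Prop :=
  ∀ i j, Integrable (fun ω => f ω i j) μ

namespace EntrywiseIntegrable

variable {f g : Ω → Matrix m n ℝ}

theorem const [IsFiniteMeasure μ] (A : Matrix m n ℝ) : EntrywiseIntegrable μ fun _ => A :=
  fun _ _ => integrable_const _

theorem add (hf : EntrywiseIntegrable μ f) (hg : EntrywiseIntegrable μ g) :
    EntrywiseIntegrable μ fun ω => f ω + g ω :=
  fun i j => (hf i j).add (hg i j)

theorem sub (hf : EntrywiseIntegrable μ f) (hg : EntrywiseIntegrable μ g) :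
    EntrywiseIntegrable μ fun ω => f ω - g ω :=
  fun i j => (hf i j).sub (hg i j)

theorem transpose (hf : EntrywiseIntegrable μ f) : EntrywiseIntegrable μ fun ω => (f ω)ᵀ :=
  fun i j => hf j i

theorem mul_const [Fintype n] (hf : EntrywiseIntegrable μ f) (A : Matrix n l ℝ) :
    EntrywiseIntegrable μ fun ω => f ω * A :=
  fun i _ => integrable_finsetSum _ fun k _ => (hf i k).mul_const _

theorem const_mul [Fintype m] (hf : EntrywiseIntegrable μ f) (A : Matrix l m ℝ) :
    EntrywiseIntegrable μ fun ω => A * f ω :=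
  fun _ j => integrable_finsetSum _ fun k _ => (hf k j).const_mul _

end EntrywiseIntegrable

variable {f g : Ω → Matrix m n ℝ}

theorem matExp_const [IsProbabilityMeasure μ] (A : Matrix m n ℝ) :
    matExp μ (fun _ => A) = A := by
  ext i j
  simp [matExp]

theorem matExp_add (hf : EntrywiseIntegrable μ f) (hg : EntrywiseIntegrable μ g) :
    matExp μ (fun ω => f ω + g ω) = matExp μ f + matExp μ g := by
  ext i j
  exact integral_add (hf i j) (hg i j)

theorem matExp_sub (hf : EntrywiseIntegrable μ f) (hg : EntrywiseIntegrable μ g) :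
    matExp μ (fun ω => f ω - g ω) = matExp μ f - matExp μ g := by
  ext i j
  exact integral_sub (hf i j) (hg i j)

theorem matExp_transpose (f : Ω → Matrix m n ℝ) :
    matExp μ (fun ω => (f ω)ᵀ) = (matExp μ f)ᵀ :=
  rfl

theorem matExp_mul_const [Fintype n] (hf : EntrywiseIntegrable μ f) (A : Matrix n l ℝ) :
    matExp μ (fun ω => f ω * A) = matExp μ f * A := by
  ext i j
  simp only [matExp, of_apply, mul_apply]
  rw [integral_finsetSum _ fun k _ => (hf i k).mul_const _]
  simp only [integral_mul_const]

theorem matExp_const_mul [Fintype m] (hf : EntrywiseIntegrable μ f) (A : Matrix l m ℝ) :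
    matExp μ (fun ω => A * f ω) = A * matExp μ f := by
  ext i j
  simp only [matExp, of_apply, mul_apply]
  rw [integral_finsetSum _ fun k _ => (hf k j).const_mul _]
  simp only [integral_const_mul]

theorem dotProduct_matExp_mulVec [Fintype m] [Fintype n] (hf : EntrywiseIntegrable μ f)
    (x : m → ℝ) (y : n → ℝ) :
    x ⬝ᵥ matExp μ f *ᵥ y = ∫ ω, x ⬝ᵥ f ω *ᵥ y ∂μ := by
  simp only [dotProduct, mulVec, matExp, of_apply]
  rw [integral_finsetSum _ fun i _ =>
    (integrable_finsetSum _ fun j _ => (hf i j).mul_const _).const_mul _]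
  refine Finset.sum_congr rfl fun i _ => ?_
  rw [integral_const_mul, integral_finsetSum _ fun j _ => (hf i j).mul_const _]
  simp only [integral_mul_const]

theorem posSemidef_matExp [Fintype n] {f : Ω → Matrix n n ℝ} (hf : EntrywiseIntegrable μ f)
    (hpsd : ∀ ω, (f ω).PosSemidef) : (matExp μ f).PosSemidef := by
  rw [posSemidef_iff_dotProduct_mulVec]
  refine ⟨?_, fun x => ?_⟩
  · ext i j
    exact integral_congr_ae (ae_of_all _ fun ω => (hpsd ω).isHermitian.apply i j)
  · rw [dotProduct_matExp_mulVec hf]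
    exact integral_nonneg fun ω => (hpsd ω).dotProduct_mulVec_nonneg x

theorem sub_mul_mul_sub_transpose_expand [Fintype n] (A B : Matrix m n ℝ) (Ξ : Matrix n n ℝ) :
    (A - B) * Ξ * (A - B)ᵀ = A * Ξ * Aᵀ - (A * Ξ * Bᵀ + B * (Ξ * Aᵀ)) + B * Ξ * Bᵀ := by
  simp only [transpose_sub, Matrix.sub_mul, Matrix.mul_sub, Matrix.mul_assoc]
  abel

variable [Fintype n] [IsProbabilityMeasure μ] {Ξ : Matrix n n ℝ}

theorem EntrywiseIntegrable.sub_mul_mul_sub_transpose (hf : EntrywiseIntegrable μ f)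
    (hq : EntrywiseIntegrable μ fun ω => f ω * Ξ * (f ω)ᵀ) (A : Matrix m n ℝ) :
    EntrywiseIntegrable μ fun ω => (A - f ω) * Ξ * (A - f ω)ᵀ := by
  simp_rw [sub_mul_mul_sub_transpose_expand]
  exact ((const _).sub ((hf.transpose.const_mul (A * Ξ)).add (hf.mul_const (Ξ * Aᵀ)))).add hq

theorem matExp_sub_mul_mul_sub_transpose (hf : EntrywiseIntegrable μ f)
    (hq : EntrywiseIntegrable μ fun ω => f ω * Ξ * (f ω)ᵀ) (A : Matrix m n ℝ) :
    matExp μ (fun ω => (A - f ω) * Ξ * (A - f ω)ᵀ) =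
      (A - matExp μ f) * Ξ * (A - matExp μ f)ᵀ +
        (matExp μ (fun ω => f ω * Ξ * (f ω)ᵀ) - matExp μ f * Ξ * (matExp μ f)ᵀ) := by
  have hl := hf.transpose.const_mul (A * Ξ)
  have hr := hf.mul_const (Ξ * Aᵀ)
  simp_rw [sub_mul_mul_sub_transpose_expand]
  rw [matExp_add ((EntrywiseIntegrable.const _).sub (hl.add hr)) hq,
    matExp_sub (.const _) (hl.add hr), matExp_add hl hr, matExp_const,
    matExp_const_mul hf.transpose, matExp_transpose, matExp_mul_const hf]
  abel

theorem posSemidef_matExp_mul_mul_transpose_sub [Fintype m] (hf : EntrywiseIntegrable μ f)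
    (hq : EntrywiseIntegrable μ fun ω => f ω * Ξ * (f ω)ᵀ) (hΞ : Ξ.PosSemidef) :
    (matExp μ (fun ω => f ω * Ξ * (f ω)ᵀ) - matExp μ f * Ξ * (matExp μ f)ᵀ).PosSemidef := by
  have h := matExp_sub_mul_mul_sub_transpose hf hq (matExp μ f)
  simp only [sub_self, Matrix.zero_mul, transpose_zero, Matrix.mul_zero, zero_add] at h
  rw [← h]
  refine posSemidef_matExp (hf.sub_mul_mul_sub_transpose hq _) fun ω => ?_
  simpa using hΞ.mul_mul_conjTranspose_same (matExp μ f - f ω)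

end Expectation

theorem averaged_covariance_efficiency_general {Ω : Type*} [MeasurableSpace Ω]
    (μ : Measure Ω) [IsProbabilityMeasure μ] {n : ℕ}
    (Ctil : Ω → Matrix (Fin n) (Fin n) ℝ)
    (Cstar : Matrix (Fin n) (Fin n) ℝ) (hCsym : Cstar.IsSymm)
    (hE : matExp μ Ctil = Cstar)
    (ρ : ℝ) (hρ0 : 0 ≤ ρ) (hρ1 : ρ < 1) (τ : ℕ) (hτ : 1 ≤ τ)
    (hCnorm : ‖Cstar‖ ≤ ρ ^ τ)
    (Ξ : Matrix (Fin n) (Fin n) ℝ) (hΞ : Ξ.PosSemidef)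
    (hint1 : ∀ i j, Integrable (fun ω => Ctil ω i j) μ)
    (hint2 : ∀ i j, Integrable (fun ω => (Ctil ω * Ξ * (Ctil ω)ᵀ) i j) μ)
    (hquad : ‖matExp μ (fun ω => Ctil ω * Ξ * (Ctil ω)ᵀ)‖ ≤ ρ ^ τ * ‖Ξ‖)
    (Ξbar : Matrix (Fin n) (Fin n) ℝ)
    (hΞbar : Ξbar = ((1 : Matrix (Fin n) (Fin n) ℝ) - Cstar)⁻¹ *
      matExp μ (fun ω => ((1 : Matrix (Fin n) (Fin n) ℝ) - Ctil ω) * Ξ *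
        ((1 : Matrix (Fin n) (Fin n) ℝ) - Ctil ω)ᵀ) *
      ((1 : Matrix (Fin n) (Fin n) ℝ) - Cstar)⁻¹) :
    (Ξbar - Ξ).PosSemidef ∧
    ‖Ξbar - Ξ‖ ≤ (1 + ρ ^ τ) * ρ ^ τ / (1 - ρ ^ τ) ^ 2 * ‖Ξ‖ := by
  have hr : ρ ^ τ < 1 := pow_lt_one₀ hρ0 hρ1 (by omega)
  have hD : IsUnit (1 - Cstar).det :=
    (isUnit_iff_isUnit_det _).mp (isUnit_one_sub_of_norm_lt_one (hCnorm.trans_lt hr))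
  have hDsymm : (1 - Cstar)ᵀ = 1 - Cstar := by rw [transpose_sub, transpose_one, hCsym]
  set M := matExp μ (fun ω => Ctil ω * Ξ * (Ctil ω)ᵀ) - Cstar * Ξ * Cstar
  have hM : M.PosSemidef := by
    simpa only [hE, hCsym.eq] using posSemidef_matExp_mul_mul_transpose_sub hint1 hint2 hΞ
  have hdiff : Ξbar - Ξ = (1 - Cstar)⁻¹ * M * (1 - Cstar)⁻¹ := by
    rw [hΞbar, matExp_sub_mul_mul_sub_transpose hint1 hint2, hE, hDsymm, hCsym.eq,
      Matrix.mul_add, Matrix.add_mul, ← Matrix.mul_assoc _ ((1 - Cstar) * Ξ),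
      mul_nonsing_inv_cancel_right (h := hD), nonsing_inv_mul_cancel_left (h := hD),
      add_sub_cancel_left]
  have hMnorm : ‖M‖ ≤ (1 + ρ ^ τ) * ρ ^ τ * ‖Ξ‖ :=
    calc ‖M‖ ≤ ‖matExp μ (fun ω => Ctil ω * Ξ * (Ctil ω)ᵀ)‖ + ‖Cstar‖ * ‖Ξ‖ * ‖Cstar‖ :=
          (norm_sub_le _ _).trans (by gcongr; exact norm_mul₃_le)
      _ ≤ ρ ^ τ * ‖Ξ‖ + ρ ^ τ * ‖Ξ‖ * ρ ^ τ := by gcongr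
      _ = (1 + ρ ^ τ) * ρ ^ τ * ‖Ξ‖ := by ring
  refine ⟨hdiff ▸ ?_, hdiff ▸ ?_⟩
  · have h := hM.mul_mul_conjTranspose_same (1 - Cstar)⁻¹
    rwa [conjTranspose_eq_transpose_of_trivial, transpose_nonsing_inv, hDsymm] at h
  · have hinv := l2_opNorm_inv_one_sub_le hCnorm hr
    calc ‖(1 - Cstar)⁻¹ * M * (1 - Cstar)⁻¹‖ ≤ ‖(1 - Cstar)⁻¹‖ * ‖M‖ * ‖(1 - Cstar)⁻¹‖ :=
          norm_mul₃_le
      _ ≤ (1 - ρ ^ τ)⁻¹ * ((1 + ρ ^ τ) * ρ ^ τ * ‖Ξ‖) * (1 - ρ ^ τ)⁻¹ := by gcongr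
      _ = (1 + ρ ^ τ) * ρ ^ τ / (1 - ρ ^ τ) ^ 2 * ‖Ξ‖ := by rw [div_eq_mul_inv, ← inv_pow]; ring

/-- If `𝔼[C̃⋆] = C⋆` (symmetric, as it is the expectation of products of i.i.d. projections),
`‖C⋆‖ ≤ ρ^τ < 1`, and `‖𝔼[C̃⋆ Ξ⋆ C̃⋆ᵀ]‖ ≤ ρ^τ ‖Ξ⋆‖` for a positive semidefinite `Ξ⋆`, then
`Ξ̄⋆ = (I - C⋆)⁻¹ 𝔼[(I - C̃⋆) Ξ⋆ (I - C̃⋆)ᵀ] (I - C⋆)⁻¹` satisfies `Ξ̄⋆ ⪰ Ξ⋆` and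
`‖Ξ̄⋆ - Ξ⋆‖ ≤ (1 + ρ^τ) ρ^τ / (1 - ρ^τ)² ⬝ ‖Ξ⋆‖`. -/
theorem averaged_covariance_efficiency {Ω : Type*} [MeasurableSpace Ω]
    (μ : Measure Ω) [IsProbabilityMeasure μ] {n : ℕ}
    (Ctil : Ω → Matrix (Fin n) (Fin n) ℝ) (hmeas : Measurable Ctil)
    (Cstar : Matrix (Fin n) (Fin n) ℝ) (hCsym : Cstar.IsSymm)
    (hE : matExp μ Ctil = Cstar)
    (ρ : ℝ) (hρ0 : 0 ≤ ρ) (hρ1 : ρ < 1) (τ : ℕ) (hτ : 1 ≤ τ)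
    (hCnorm : ‖Cstar‖ ≤ ρ ^ τ)
    (Ξ : Matrix (Fin n) (Fin n) ℝ) (hΞ : Ξ.PosSemidef)
    (hint1 : ∀ i j, Integrable (fun ω => Ctil ω i j) μ)
    (hint2 : ∀ i j, Integrable (fun ω => (Ctil ω * Ξ * (Ctil ω)ᵀ) i j) μ)
    (hquad : ‖matExp μ (fun ω => Ctil ω * Ξ * (Ctil ω)ᵀ)‖ ≤ ρ ^ τ * ‖Ξ‖)
    (Ξbar : Matrix (Fin n) (Fin n) ℝ)
    (hΞbar : Ξbar = ((1 : Matrix (Fin n) (Fin n) ℝ) - Cstar)⁻¹ *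
      matExp μ (fun ω => ((1 : Matrix (Fin n) (Fin n) ℝ) - Ctil ω) * Ξ *
        ((1 : Matrix (Fin n) (Fin n) ℝ) - Ctil ω)ᵀ) *
      ((1 : Matrix (Fin n) (Fin n) ℝ) - Cstar)⁻¹) :
    (Ξbar - Ξ).PosSemidef ∧
    ‖Ξbar - Ξ‖ ≤ (1 + ρ ^ τ) * ρ ^ τ / (1 - ρ ^ τ) ^ 2 * ‖Ξ‖ :=
  averaged_covariance_efficiency_general μ Ctil Cstar hCsym hE ρ hρ0 hρ1 τ hτ hCnorm Ξ hΞ hint1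
    hint2 hquad Ξbar hΞbar
end

section
/- Let $C^\star$ be a symmetric matrix with $\|C^\star\| \leq \rho^\tau < 1/2$, let $M = \mathbb{E}[(I - \widetilde{C}^\star)\Xi^\star(I - \widetilde{C}^\star)^\top]$ be positive semidefinite, let $\bar{\Xi}^\star = (I - C^\star)^{-1} M (I - C^\star)^{-1}$, and let $\widetilde{\Xi}^\star$ be the (unique) symmetric solution of the Lyapunov equation $(\tfrac{1}{2}I - C^\star)\widetilde{\Xi}^\star + \widetilde{\Xi}^\star(\tfrac{1}{2}I - C^\star) = M$. Then $\bar{\Xi}^\star \preceq \widetilde{\Xi}^\star$. -/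
/-!
Put `A = I - C⋆` and `B = ½I - C⋆ = A - ½I`; both are positive definite because `‖C⋆‖ < ½`.
The averaged covariance `Ξ̄ = A⁻¹MA⁻¹` satisfies `BΞ̄ + Ξ̄B = M - (I - A⁻¹)M(I - A⁻¹)`, so
`D = Ξ̃ - Ξ̄` solves the Lyapunov equation `BD + DB = (I - A⁻¹)M(I - A⁻¹) ⪰ 0`. Testing it against
an eigenvector `v` of `D` with eigenvalue `λ` gives `2λ ⟨v, Bv⟩ ≥ 0`, hence `λ ≥ 0`.
-/

open Matrix
open scoped Matrix.Norms.L2Operator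

namespace Matrix

open scoped ComplexOrder

variable {ι 𝕜 : Type*} [Fintype ι] [DecidableEq ι] [RCLike 𝕜]

lemma re_star_dotProduct_mulVec_le_l2_opNorm_mul (C : Matrix ι ι 𝕜) (x : ι → 𝕜) :
    RCLike.re (star x ⬝ᵥ C *ᵥ x) ≤ ‖C‖ * ‖WithLp.toLp 2 x‖ ^ 2 := by
  have hinner : star x ⬝ᵥ C *ᵥ x = inner 𝕜 (WithLp.toLp 2 x) (WithLp.toLp 2 (C *ᵥ x)) := by
    rw [EuclideanSpace.inner_toLp_toLp, dotProduct_comm]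
  calc RCLike.re (star x ⬝ᵥ C *ᵥ x) ≤ ‖WithLp.toLp 2 x‖ * ‖WithLp.toLp 2 (C *ᵥ x)‖ := by
        rw [hinner]; exact re_inner_le_norm _ _
    _ ≤ ‖WithLp.toLp 2 x‖ * (‖C‖ * ‖WithLp.toLp 2 x‖) := by
        gcongr; exact C.l2_opNorm_mulVec (WithLp.toLp 2 x)
    _ = ‖C‖ * ‖WithLp.toLp 2 x‖ ^ 2 := by ring

lemma posDef_smul_one_sub_of_l2_opNorm_lt {C : Matrix ι ι 𝕜} (hC : C.IsHermitian) {μ : ℝ}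
    (h : ‖C‖ < μ) : (μ • (1 : Matrix ι ι 𝕜) - C).PosDef := by
  have hherm : (μ • (1 : Matrix ι ι 𝕜) - C).IsHermitian :=
    (isHermitian_one.smul (IsSelfAdjoint.all μ)).sub hC
  refine posDef_iff_dotProduct_mulVec.mpr ⟨hherm, fun x hx ↦ ?_⟩
  refine RCLike.pos_iff.mpr ⟨?_, hherm.im_star_dotProduct_mulVec_self x⟩
  have hx_pos : 0 < ‖WithLp.toLp 2 x‖ := norm_pos_iff.mpr (by simpa using hx)
  have hnorm : RCLike.re (star x ⬝ᵥ x) = ‖WithLp.toLp 2 x‖ ^ 2 := by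
    rw [← inner_self_eq_norm_sq (𝕜 := 𝕜), EuclideanSpace.inner_toLp_toLp, dotProduct_comm]
  rw [sub_mulVec, smul_mulVec, one_mulVec, dotProduct_sub, dotProduct_smul, map_sub,
    RCLike.smul_re, hnorm]
  nlinarith [re_star_dotProduct_mulVec_le_l2_opNorm_mul C x,
    mul_pos (sub_pos.2 h) (pow_pos hx_pos 2)]

lemma IsHermitian.star_eigenvectorBasis_dotProduct_mulVec {D : Matrix ι ι 𝕜}
    (hD : D.IsHermitian) (i : ι) (w : ι → 𝕜) :
    star ⇑(hD.eigenvectorBasis i) ⬝ᵥ D *ᵥ w =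
      hD.eigenvalues i • (star ⇑(hD.eigenvectorBasis i) ⬝ᵥ w) := by
  have hvD : star ⇑(hD.eigenvectorBasis i) ᵥ* D = star (D *ᵥ hD.eigenvectorBasis i) := by
    rw [star_mulVec, hD.eq]
  rw [dotProduct_mulVec, hvD, hD.mulVec_eigenvectorBasis, star_smul, smul_dotProduct,
    star_trivial]

lemma IsHermitian.posSemidef_of_posSemidef_mul_add_mul {B D : Matrix ι ι 𝕜} (hB : B.PosDef)
    (hD : D.IsHermitian) (h : (B * D + D * B).PosSemidef) : D.PosSemidef := by
  rw [hD.posSemidef_iff_eigenvalues_nonneg]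
  intro i
  set v : ι → 𝕜 := ⇑(hD.eigenvectorBasis i)
  have hv : v ≠ 0 := fun hv ↦
    hD.eigenvectorBasis.orthonormal.ne_zero i (by ext j; exact congrFun hv j)
  have hquad : star v ⬝ᵥ (B * D + D * B) *ᵥ v = (2 * hD.eigenvalues i) • (star v ⬝ᵥ B *ᵥ v) := by
    rw [add_mulVec, dotProduct_add, ← mulVec_mulVec, ← mulVec_mulVec, hD.mulVec_eigenvectorBasis,
      mulVec_smul, dotProduct_smul, hD.star_eigenvectorBasis_dotProduct_mulVec, two_mul, add_smul]
  have hnonneg := h.dotProduct_mulVec_nonneg v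
  rw [hquad, RCLike.nonneg_iff, RCLike.smul_re] at hnonneg
  have hpos := hB.re_dotProduct_pos hv
  show (0 : ℝ) ≤ hD.eigenvalues i
  linarith [nonneg_of_mul_nonneg_left hnonneg.1 hpos]

lemma sub_half_smul_one_mul_add_mul_sub_half_smul_one {K : Type*} [Field K] [NeZero (2 : K)]
    {A : Matrix ι ι K} (hA : IsUnit A.det) (M : Matrix ι ι K) :
    (A - (1/2 : K) • 1) * (A⁻¹ * M * A⁻¹) + A⁻¹ * M * A⁻¹ * (A - (1/2 : K) • 1) =
      M - (1 - A⁻¹) * M * (1 - A⁻¹) := by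
  calc (A - (1/2 : K) • 1) * (A⁻¹ * M * A⁻¹) + A⁻¹ * M * A⁻¹ * (A - (1/2 : K) • 1)
      = A * A⁻¹ * M * A⁻¹ + A⁻¹ * M * (A⁻¹ * A) - ((1/2 : K) + 1/2) • (A⁻¹ * M * A⁻¹) := by
        simp only [sub_mul, mul_sub, smul_mul_assoc, mul_smul_comm, one_mul, mul_one, add_smul,
          mul_assoc]
        abel
    _ = M - (1 - A⁻¹) * M * (1 - A⁻¹) := by
        rw [mul_nonsing_inv A hA, nonsing_inv_mul A hA, add_halves, one_smul]
        noncomm_ring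

end Matrix

/-- Comparison of the Polyak–Ruppert averaged covariance with the last-iterate covariance:
if `C⋆` is symmetric with `‖C⋆‖ ≤ ρ^τ < 1/2`, `M` is positive semidefinite,
`Ξ̄⋆ = (I - C⋆)⁻¹ M (I - C⋆)⁻¹`, and `Ξ̃⋆` is the symmetric solution of the Lyapunov
equation `(½I - C⋆) Ξ̃⋆ + Ξ̃⋆ (½I - C⋆) = M`, then `Ξ̄⋆ ⪯ Ξ̃⋆`. -/
theorem averaged_vs_last_covariance {n : ℕ}
    (Cstar : Matrix (Fin n) (Fin n) ℝ) (hCsym : Cstar.IsSymm)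
    (ρ : ℝ) (τ : ℕ) (hCnorm : ‖Cstar‖ ≤ ρ ^ τ) (hρτ : ρ ^ τ < 1/2)
    (M : Matrix (Fin n) (Fin n) ℝ) (hM : M.PosSemidef)
    (Ξbar : Matrix (Fin n) (Fin n) ℝ)
    (hΞbar : Ξbar = ((1 : Matrix (Fin n) (Fin n) ℝ) - Cstar)⁻¹ * M *
      ((1 : Matrix (Fin n) (Fin n) ℝ) - Cstar)⁻¹)
    (Ξtil : Matrix (Fin n) (Fin n) ℝ) (hΞsym : Ξtil.IsSymm)
    (hLyap : ((1/2 : ℝ) • (1 : Matrix (Fin n) (Fin n) ℝ) - Cstar) * Ξtil +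
      Ξtil * ((1/2 : ℝ) • (1 : Matrix (Fin n) (Fin n) ℝ) - Cstar) = M) :
    (Ξtil - Ξbar).PosSemidef := by
  set A := (1 : Matrix (Fin n) (Fin n) ℝ) - Cstar
  set B := (1/2 : ℝ) • (1 : Matrix (Fin n) (Fin n) ℝ) - Cstar
  have hC : Cstar.IsHermitian := isHermitian_iff_isSymm.mpr hCsym
  have hB : B.PosDef := posDef_smul_one_sub_of_l2_opNorm_lt hC (hCnorm.trans_lt hρτ)
  have hA : A.PosDef := by
    simpa using posDef_smul_one_sub_of_l2_opNorm_lt hC (μ := 1) (by linarith)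
  have hA_inv : (A⁻¹)ᴴ = A⁻¹ := hA.inv.isHermitian.eq
  have hΞbar_psd : Ξbar.PosSemidef := by
    have h := hM.mul_mul_conjTranspose_same A⁻¹
    rwa [hA_inv, ← hΞbar] at h
  have hBA : B = A - (1/2 : ℝ) • 1 := by module
  have hD_lyap : B * (Ξtil - Ξbar) + (Ξtil - Ξbar) * B = (1 - A⁻¹) * M * (1 - A⁻¹)ᴴ := by
    calc B * (Ξtil - Ξbar) + (Ξtil - Ξbar) * B
        = (B * Ξtil + Ξtil * B) - (B * Ξbar + Ξbar * B) := by noncomm_ring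
      _ = (1 - A⁻¹) * M * (1 - A⁻¹)ᴴ := by
        rw [hLyap, hΞbar, hBA, sub_half_smul_one_mul_add_mul_sub_half_smul_one
          hA.det_pos.ne'.isUnit, conjTranspose_sub, conjTranspose_one, hA_inv, sub_sub_cancel]
  refine ((isHermitian_iff_isSymm.mpr hΞsym).sub hΞbar_psd.isHermitian)
    |>.posSemidef_of_posSemidef_mul_add_mul hB ?_
  rw [hD_lyap]
  exact hM.mul_mul_conjTranspose_same _
end

section
/- Let $G$ be an $m \times d$ real matrix with full row rank, let $H$ be a symmetric $d \times d$ matrix, let $K = \begin{pmatrix} H & G^\top \\ G & 0 \end{pmatrix}$ be invertible, let $\Sigma$ be a $d \times d$ positive definite matrix, and define $\Xi = K^{-1} \begin{pmatrix} \Sigma & 0 \\ 0 & 0 \end{pmatrix} K^{-1}$. Then for a vector $z \in \mathbb{R}^{d+m}$ one has $z^\top \Xi z = 0$ if and only if $z \in U_1 := \{ (G^\top u, 0) : u \in \mathbb{R}^m \}$. In particular, $z^\top \Xi z > 0$ for every $z \notin U_1$. -/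
/-!
Since `K` is symmetric, so is `K⁻¹`, and `zᵀ Ξ z = wᵀ diag(Σ, 0) w = w₁ᵀ Σ w₁` for `w = K⁻¹ z`.
As `Σ ≻ 0` this vanishes exactly when `w₁ = 0`, i.e. when `z = K (0, u) = (Gᵀ u, 0)` for some `u`,
and is positive otherwise.
-/

open Matrix

namespace Matrix

variable {ι κ R : Type*} [Fintype ι] [Fintype κ]

theorem dotProduct_mul_mul_mulVec_of_isSymm [CommSemiring R] {A : Matrix ι ι R}
    (hA : A.IsSymm) (B : Matrix ι ι R) (z : ι → R) :
    z ⬝ᵥ ((A * B * A) *ᵥ z) = (A *ᵥ z) ⬝ᵥ (B *ᵥ (A *ᵥ z)) := by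
  rw [← mulVec_mulVec, ← mulVec_mulVec, dotProduct_mulVec, ← mulVec_transpose, hA.eq]

theorem dotProduct_fromBlocks_zero_mulVec [NonUnitalNonAssocSemiring R] (A : Matrix ι ι R)
    (v : ι ⊕ κ → R) :
    v ⬝ᵥ (fromBlocks A 0 0 0 *ᵥ v) = (v ∘ Sum.inl) ⬝ᵥ (A *ᵥ (v ∘ Sum.inl)) := by
  simp [fromBlocks_mulVec, dotProduct, Fintype.sum_sum_type]

theorem fromBlocks_zero₂₂_mulVec_sumElim_zero [NonUnitalNonAssocSemiring R]
    (A : Matrix ι ι R) (B : Matrix ι κ R) (C : Matrix κ ι R) (u : κ → R) :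
    fromBlocks A B C 0 *ᵥ Sum.elim 0 u = Sum.elim (B *ᵥ u) 0 := by
  simp [fromBlocks_mulVec]

theorem inv_mulVec_comp_inl_eq_zero_iff [DecidableEq ι] [DecidableEq κ] [CommRing R]
    {K : Matrix (ι ⊕ κ) (ι ⊕ κ) R} (hK : IsUnit K) (z : ι ⊕ κ → R) :
    (K⁻¹ *ᵥ z) ∘ Sum.inl = 0 ↔ ∃ u : κ → R, z = K *ᵥ Sum.elim 0 u := by
  have hdet : IsUnit K.det := (isUnit_iff_isUnit_det K).mp hK
  constructor
  · intro h
    refine ⟨(K⁻¹ *ᵥ z) ∘ Sum.inr, ?_⟩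
    rw [← h, Sum.elim_comp_inl_inr, mulVec_mulVec, mul_nonsing_inv K hdet, one_mulVec]
  · rintro ⟨u, rfl⟩
    rw [mulVec_mulVec, nonsing_inv_mul K hdet, one_mulVec]
    rfl

theorem PosDef.dotProduct_mulVec_eq_zero_iff [Ring R] [PartialOrder R] [StarRing R]
    {A : Matrix ι ι R} (hA : A.PosDef) (x : ι → R) :
    star x ⬝ᵥ (A *ᵥ x) = 0 ↔ x = 0 := by
  refine ⟨fun h => ?_, fun h => by simp [h]⟩
  by_contra hx
  exact (hA.dotProduct_mulVec_pos hx).ne' h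

end Matrix

theorem constrained_covariance_kernel_general {d m : ℕ}
    (G : Matrix (Fin m) (Fin d) ℝ)
    (H : Matrix (Fin d) (Fin d) ℝ) (hH : H.IsSymm)
    (K : Matrix (Fin d ⊕ Fin m) (Fin d ⊕ Fin m) ℝ)
    (hK : K = Matrix.fromBlocks H Gᵀ G 0) (hKinv : IsUnit K)
    (Cov : Matrix (Fin d) (Fin d) ℝ) (hCov : Cov.PosDef)
    (Ξ : Matrix (Fin d ⊕ Fin m) (Fin d ⊕ Fin m) ℝ)
    (hΞ : Ξ = K⁻¹ * Matrix.fromBlocks Cov 0 0 0 * K⁻¹) :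
    ∀ z : Fin d ⊕ Fin m → ℝ,
      (z ⬝ᵥ (Ξ *ᵥ z) = 0 ↔ ∃ u : Fin m → ℝ, z = Sum.elim (Gᵀ *ᵥ u) 0) ∧
      ((¬ ∃ u : Fin m → ℝ, z = Sum.elim (Gᵀ *ᵥ u) 0) → 0 < z ⬝ᵥ (Ξ *ᵥ z)) := by
  intro z
  have hKsymm : K.IsSymm := hK ▸ hH.fromBlocks (transpose_transpose G) isSymm_zero
  set w₁ := (K⁻¹ *ᵥ z) ∘ Sum.inl
  have hquad : z ⬝ᵥ (Ξ *ᵥ z) = w₁ ⬝ᵥ (Cov *ᵥ w₁) := by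
    rw [hΞ, dotProduct_mul_mul_mulVec_of_isSymm hKsymm.inv, dotProduct_fromBlocks_zero_mulVec]
  have hU₁ : (∃ u : Fin m → ℝ, z = Sum.elim (Gᵀ *ᵥ u) 0) ↔ w₁ = 0 := by
    rw [inv_mulVec_comp_inl_eq_zero_iff hKinv, hK]
    simp only [fromBlocks_zero₂₂_mulVec_sumElim_zero]
  rw [hquad, hU₁]
  exact ⟨by simpa only [star_trivial] using hCov.dotProduct_mulVec_eq_zero_iff w₁,
    fun hw₁ => by simpa only [star_trivial] using hCov.dotProduct_mulVec_pos hw₁⟩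

/-- Degeneracy structure of the limiting covariance of the constrained `M`-estimator:
for the KKT matrix `K = [[H, Gᵀ], [G, 0]]` (invertible, `G` of full row rank, `Σ ≻ 0`) and
`Ξ = K⁻¹ diag(Σ, 0) K⁻¹`, one has `zᵀ Ξ z = 0` iff `z ∈ U₁ = {(Gᵀ u, 0) : u}`;
in particular `zᵀ Ξ z > 0` for every `z ∉ U₁`. -/
theorem constrained_covariance_kernel {d m : ℕ}
    (G : Matrix (Fin m) (Fin d) ℝ) (hG : G.rank = m)
    (H : Matrix (Fin d) (Fin d) ℝ) (hH : H.IsSymm)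
    (K : Matrix (Fin d ⊕ Fin m) (Fin d ⊕ Fin m) ℝ)
    (hK : K = Matrix.fromBlocks H Gᵀ G 0) (hKinv : IsUnit K)
    (Cov : Matrix (Fin d) (Fin d) ℝ) (hCov : Cov.PosDef)
    (Ξ : Matrix (Fin d ⊕ Fin m) (Fin d ⊕ Fin m) ℝ)
    (hΞ : Ξ = K⁻¹ * Matrix.fromBlocks Cov 0 0 0 * K⁻¹) :
    ∀ z : Fin d ⊕ Fin m → ℝ,
      (z ⬝ᵥ (Ξ *ᵥ z) = 0 ↔ ∃ u : Fin m → ℝ, z = Sum.elim (Gᵀ *ᵥ u) 0) ∧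
      ((¬ ∃ u : Fin m → ℝ, z = Sum.elim (Gᵀ *ᵥ u) 0) → 0 < z ⬝ᵥ (Ξ *ᵥ z)) :=
  constrained_covariance_kernel_general G H hH K hK hKinv Cov hCov Ξ hΞ
end

section
/- Let $C$ be a square matrix with $\|C\| \leq \rho^\tau$ for some $\rho \in [0,1)$ and positive integer $\tau$, let $K$ and $K^\star$ be invertible matrices with $\|K^{-1}\| \leq \Upsilon_K$ and $\|(K^\star)^{-1}\| \leq \Upsilon_K$, and let $\omega$, $\nabla\mathcal{L}$ be vectors satisfying $\|\nabla\mathcal{L} - K\omega\| \leq \|K - K^\star\| \|\omega\| + \Upsilon_L \|\omega\|^2$. Suppose $\|K - K^\star\| \leq \nu$ and $\|\omega\| \leq \nu$ with $\nu \leq \frac{1 - \rho^\tau}{4\Upsilon_K(1 + \Upsilon_L)}$. Then $-\langle (I - C) K^{-1} \nabla\mathcal{L}, \omega \rangle \leq -\frac{1 - \rho^\tau}{2} \|\omega\|^2$. -/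
/-!
Write `K⁻¹ ∇𝓛 = ω + e` with `e = K⁻¹ (∇𝓛 - K ω)`. The hypotheses on the residual and on `ν` make
`e` small relative to `ω`: `‖e‖ ≤ Υ_K (1 + Υ_L) ν ‖ω‖ ≤ (1 - ρ^τ)/4 ‖ω‖`. Since `‖C‖ ≤ ρ^τ`, the map
`I - C` is strongly monotone with constant `1 - ρ^τ` and has norm at most `1 + ρ^τ`, so the
perturbation `e` can eat at most half of the monotonicity margin.
-/

open Matrix WithLp
open scoped Matrix.Norms.L2Operator RealInnerProductSpace

namespace ContinuousLinearMap

variable {E : Type*} [NormedAddCommGroup E] [InnerProductSpace ℝ E]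

lemma one_sub_norm_mul_sq_le_inner (T : E →L[ℝ] E) (x : E) :
    (1 - ‖T‖) * ‖x‖ ^ 2 ≤ ⟪x - T x, x⟫ := by
  have hTx : ⟪T x, x⟫ ≤ ‖T‖ * ‖x‖ * ‖x‖ :=
    (real_inner_le_norm _ _).trans (mul_le_mul_of_nonneg_right (T.le_opNorm x) (norm_nonneg x))
  rw [inner_sub_left, real_inner_self_eq_norm_sq]
  linarith

lemma norm_one_sub_le (T : E →L[ℝ] E) : ‖1 - T‖ ≤ 1 + ‖T‖ :=
  (norm_sub_le _ _).trans (add_le_add_left norm_id_le _)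

theorem inner_one_sub_apply_add_ge {T : E →L[ℝ] E} {c : ℝ} (hT : ‖T‖ ≤ c) {x e : E}
    (he : ‖e‖ ≤ (1 - c) / 4 * ‖x‖) :
    (1 - c) / 2 * ‖x‖ ^ 2 ≤ ⟪(1 - T) (x + e), x⟫ := by
  have hc : 0 ≤ c := (norm_nonneg T).trans hT
  have hmain : (1 - c) * ‖x‖ ^ 2 ≤ ⟪x - T x, x⟫ :=
    le_trans (by gcongr) (T.one_sub_norm_mul_sq_le_inner x)
  have herr : -((1 + c) * ‖e‖ * ‖x‖) ≤ ⟪(1 - T) e, x⟫ := by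
    refine neg_le_of_abs_le ((abs_real_inner_le_norm _ _).trans ?_)
    gcongr
    exact ((1 - T).le_opNorm e).trans (by gcongr; exact T.norm_one_sub_le.trans (by linarith))
  rw [map_add, inner_add_left]
  change (1 - c) / 2 * ‖x‖ ^ 2 ≤ ⟪x - T x, x⟫ + _
  -- the error costs at most `(1 + c)(1 - c)/4 ‖x‖²`, leaving a slack of `((1 - c)/2)² ‖x‖²`
  nlinarith [mul_le_mul_of_nonneg_left he (by positivity : 0 ≤ (1 + c) * ‖x‖),
    sq_nonneg ((1 - c) * ‖x‖)]

end ContinuousLinearMap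

section EuclideanSpace

variable {ι : Type*} [Fintype ι]

lemma dotProduct_self_eq_norm_sq (v : ι → ℝ) : v ⬝ᵥ v = ‖toLp 2 v‖ ^ 2 := by
  rw [← real_inner_self_eq_norm_sq, EuclideanSpace.inner_toLp_toLp, star_trivial]

lemma sqrt_dotProduct_self (v : ι → ℝ) : √(v ⬝ᵥ v) = ‖toLp 2 v‖ := by
  rw [dotProduct_self_eq_norm_sq, Real.sqrt_sq (norm_nonneg _)]

lemma Matrix.dotProduct_mulVec_eq_inner [DecidableEq ι] (A : Matrix ι ι ℝ) (u v : ι → ℝ) :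
    (A *ᵥ u) ⬝ᵥ v = ⟪toEuclideanCLM (𝕜 := ℝ) A (toLp 2 u), toLp 2 v⟫ := by
  rw [toEuclideanCLM_toLp, EuclideanSpace.inner_toLp_toLp, star_trivial, dotProduct_comm]

end EuclideanSpace

theorem local_monotonicity_general {n : ℕ}
    (C K Kstar : Matrix (Fin n) (Fin n) ℝ)
    (ρ : ℝ) (τ : ℕ)
    (hC : ‖C‖ ≤ ρ ^ τ)
    (hKinv : IsUnit K)
    (ΥK ΥL : ℝ) (hΥK : 0 < ΥK) (hΥL : 0 < ΥL)
    (hK1 : ‖K⁻¹‖ ≤ ΥK)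
    (ω gradL : Fin n → ℝ)
    (hgrad : Real.sqrt ((gradL - K *ᵥ ω) ⬝ᵥ (gradL - K *ᵥ ω))
      ≤ ‖K - Kstar‖ * Real.sqrt (ω ⬝ᵥ ω) + ΥL * (ω ⬝ᵥ ω))
    (ν : ℝ) (hKν : ‖K - Kstar‖ ≤ ν) (hων : Real.sqrt (ω ⬝ᵥ ω) ≤ ν)
    (hν : ν ≤ (1 - ρ ^ τ) / (4 * ΥK * (1 + ΥL))) :
    -((((1 : Matrix (Fin n) (Fin n) ℝ) - C) *ᵥ (K⁻¹ *ᵥ gradL)) ⬝ᵥ ω)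
      ≤ -((1 - ρ ^ τ) / 2) * (ω ⬝ᵥ ω) := by
  have hsplit : K⁻¹ *ᵥ gradL = ω + K⁻¹ *ᵥ (gradL - K *ᵥ ω) := by
    rw [mulVec_sub, mulVec_mulVec, nonsing_inv_mul K ((isUnit_iff_isUnit_det K).mp hKinv),
      one_mulVec, add_sub_cancel]
  rw [sqrt_dotProduct_self, sqrt_dotProduct_self, dotProduct_self_eq_norm_sq] at hgrad
  rw [sqrt_dotProduct_self] at hων
  set e := K⁻¹ *ᵥ (gradL - K *ᵥ ω)
  set W := ‖toLp 2 ω‖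
  have hres : ‖toLp 2 (gradL - K *ᵥ ω)‖ ≤ (1 + ΥL) * ν * W := calc
    _ ≤ ‖K - Kstar‖ * W + ΥL * (W * W) := by rwa [← sq]
    _ ≤ ν * W + ΥL * (ν * W) := by gcongr
    _ = _ := by ring
  have hνΥ : ΥK * (1 + ΥL) * ν ≤ (1 - ρ ^ τ) / 4 := by
    rw [le_div_iff₀ (by positivity)] at hν
    linarith
  have he : ‖toLp 2 e‖ ≤ (1 - ρ ^ τ) / 4 * W := calc
    _ ≤ ‖K⁻¹‖ * ‖toLp 2 (gradL - K *ᵥ ω)‖ := K⁻¹.l2_opNorm_mulVec _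
    _ ≤ ΥK * ((1 + ΥL) * ν * W) := by gcongr
    _ = ΥK * (1 + ΥL) * ν * W := by ring
    _ ≤ _ := by gcongr
  have key :=
    ContinuousLinearMap.inner_one_sub_apply_add_ge (T := toEuclideanCLM (𝕜 := ℝ) C) hC he
  rw [hsplit, dotProduct_self_eq_norm_sq, dotProduct_mulVec_eq_inner, map_sub, map_one, toLp_add]
  linarith

/-- Local one-point strong-monotonicity estimate near a KKT point: under the stated norm
bounds and with `ν ≤ (1 - ρ^τ)/(4Υ_K(1 + Υ_L))`, one has
`-⟨(I - C) K⁻¹ ∇𝓛, ω⟩ ≤ -(1 - ρ^τ)/2 ⬝ ‖ω‖²`, where `‖ω‖² = ω ⬝ᵥ ω` is the Euclidean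
norm and `⟨·,·⟩` the Euclidean inner product. -/
theorem local_monotonicity {n : ℕ}
    (C K Kstar : Matrix (Fin n) (Fin n) ℝ)
    (ρ : ℝ) (hρ : ρ ∈ Set.Ico (0 : ℝ) 1) (τ : ℕ) (hτ : 0 < τ)
    (hC : ‖C‖ ≤ ρ ^ τ)
    (hKinv : IsUnit K) (hKstarinv : IsUnit Kstar)
    (ΥK ΥL : ℝ) (hΥK : 0 < ΥK) (hΥL : 0 < ΥL)
    (hK1 : ‖K⁻¹‖ ≤ ΥK) (hK2 : ‖Kstar⁻¹‖ ≤ ΥK)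
    (ω gradL : Fin n → ℝ)
    (hgrad : Real.sqrt ((gradL - K *ᵥ ω) ⬝ᵥ (gradL - K *ᵥ ω))
      ≤ ‖K - Kstar‖ * Real.sqrt (ω ⬝ᵥ ω) + ΥL * (ω ⬝ᵥ ω))
    (ν : ℝ) (hKν : ‖K - Kstar‖ ≤ ν) (hων : Real.sqrt (ω ⬝ᵥ ω) ≤ ν)
    (hν : ν ≤ (1 - ρ ^ τ) / (4 * ΥK * (1 + ΥL))) :
    -((((1 : Matrix (Fin n) (Fin n) ℝ) - C) *ᵥ (K⁻¹ *ᵥ gradL)) ⬝ᵥ ω)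
      ≤ -((1 - ρ ^ τ) / 2) * (ω ⬝ᵥ ω) :=
  local_monotonicity_general C K Kstar ρ τ hC hKinv ΥK ΥL hΥK hΥL hK1 ω gradL hgrad ν hKν hων hν
end
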